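/- Let C ⊆ ℝ^{n+1} be a cone with vertex 0 and suppose there exist r > 0 and a continuously differentiable function u on the ball B̂_r := {x̂ ∈ ℝ^n : |x̂| < r} with u(0) = 0 such that for every x = (x̂, x^{n+1}) with |x̂| < r and |x^{n+1}| < r one has x ∈ C ⟺ x^{n+1} < u(x̂). Then C is the open half-space {(x̂,t) ∈ ℝ^n × ℝ : t < ⟨Du(0), x̂⟩}, where Du(0) is the gradient of u at 0; in particular the boundary of C is the tangent hyperplane to the graph of u at the vertex. -/

import Mathlib

open Metric

/-- `C` is a cone with vertex `x`. -/
def IsConeWithVertex {d : ℕ} (C : Set (EuclideanSpace ℝ (Fin d)))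
    (x : EuclideanSpace ℝ (Fin d)) : Prop :=
  ∀ y ∈ C, ∀ τ : ℝ, 0 < τ → x + τ • (y - x) ∈ C

/-- The point of `ℝⁿ⁺¹` with base point `xhat ∈ ℝⁿ` and last coordinate `t`. -/
def pairPoint {n : ℕ} (xhat : EuclideanSpace ℝ (Fin n)) (t : ℝ) :
    EuclideanSpace ℝ (Fin (n + 1)) :=
  WithLp.toLp 2 (Fin.snoc xhat.ofLp t)

open Filter Topology Set

/-!
Since `C` is a cone, membership of `(x̂, s)` in `C` can be tested at any small scale `τ > 0`,
where it reads `s < u (τ x̂) / τ`. The difference quotient `u (τ x̂) / τ` is therefore independent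
of `τ` for small `τ`, and as `τ → 0⁺` it tends to `Du(0) x̂`; so `C` is the half-space below the
graph of `Du(0)`. Its frontier is the hyperplane because a nonzero linear functional is an open
map.
-/

lemma IsConeWithVertex.smul_mem_iff {d : ℕ} {C : Set (EuclideanSpace ℝ (Fin d))}
    (hC : IsConeWithVertex C 0) {τ : ℝ} (hτ : 0 < τ) {y : EuclideanSpace ℝ (Fin d)} :
    τ • y ∈ C ↔ y ∈ C := by
  refine ⟨fun hy => ?_, fun hy => by simpa using hC y hy τ hτ⟩
  simpa [smul_smul, inv_mul_cancel₀ hτ.ne'] using hC _ hy τ⁻¹ (inv_pos.mpr hτ)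

lemma pairPoint_smul {n : ℕ} (τ : ℝ) (xhat : EuclideanSpace ℝ (Fin n)) (t : ℝ) :
    τ • pairPoint xhat t = pairPoint (τ • xhat) (τ * t) := by
  ext i
  refine Fin.lastCases ?_ (fun j => ?_) i <;> simp [pairPoint]

lemma pairPoint_eta {n : ℕ} (x : EuclideanSpace ℝ (Fin (n + 1))) :
    pairPoint (WithLp.toLp 2 (fun i : Fin n => x i.castSucc)) (x (Fin.last n)) = x := by
  ext i
  refine Fin.lastCases ?_ (fun j => ?_) i <;> simp [pairPoint]

lemma HasFDerivAt.tendsto_apply_smul_div {E : Type*} [NormedAddCommGroup E] [NormedSpace ℝ E]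
    {u : E → ℝ} {L : E →L[ℝ] ℝ} (hL : HasFDerivAt u L 0) (hu0 : u 0 = 0) (v : E) :
    Tendsto (fun τ : ℝ => u (τ • v) / τ) (𝓝[≠] 0) (𝓝 (L v)) := by
  have hline : HasDerivAt (fun τ : ℝ => τ • v) v 0 := by
    simpa using (hasDerivAt_id (0 : ℝ)).smul_const v
  have hcomp : HasDerivAt (fun τ : ℝ => u (τ • v)) (L v) 0 :=
    (by simpa using hL : HasFDerivAt u L ((0 : ℝ) • v)).comp_hasDerivAt 0 hline
  refine (hasDerivAt_iff_tendsto_slope.mp hcomp).congr fun τ => ?_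
  simp [slope, hu0, div_eq_inv_mul]

lemma eq_of_forall_lt_iff_of_abs_lt {a b M : ℝ} (ha : |a| < M) (hb : |b| < M)
    (h : ∀ s, |s| < M → (s < a ↔ s < b)) : a = b := by
  rw [abs_lt] at ha hb
  have mid_lt : |(a + b) / 2| < M := abs_lt.mpr ⟨by linarith, by linarith⟩
  rcases lt_trichotomy a b with hab | hab | hab
  · linarith [(h _ mid_lt).mpr (by linarith)]
  · exact hab
  · linarith [(h _ mid_lt).mp (by linarith)]

lemma eventually_mul_lt_nhdsGT {r : ℝ} (hr : 0 < r) (c : ℝ) : ∀ᶠ τ in 𝓝[>] (0 : ℝ), τ * c < r :=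
  (((continuous_mul_const c).tendsto' 0 0 (zero_mul c)).eventually_lt_const hr).filter_mono
    nhdsWithin_le_nhds

def IsLocalSubgraph {n : ℕ} (C : Set (EuclideanSpace ℝ (Fin (n + 1))))
    (u : EuclideanSpace ℝ (Fin n) → ℝ) (r : ℝ) : Prop :=
  ∀ xhat : EuclideanSpace ℝ (Fin n), ∀ s : ℝ, ‖xhat‖ < r → |s| < r →
    (pairPoint xhat s ∈ C ↔ s < u xhat)

section LocalSubgraph

variable {n : ℕ} {C : Set (EuclideanSpace ℝ (Fin (n + 1)))} {u : EuclideanSpace ℝ (Fin n) → ℝ}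
  {r : ℝ}

lemma IsLocalSubgraph.mem_iff_lt_div (hrep : IsLocalSubgraph C u r)
    (hcone : IsConeWithVertex C 0) {xhat : EuclideanSpace ℝ (Fin n)} {τ M s : ℝ} (hτ : 0 < τ)
    (hx : τ * ‖xhat‖ < r) (hM : τ * M < r) (hs : |s| < M) :
    pairPoint xhat s ∈ C ↔ s < u (τ • xhat) / τ := by
  rw [← hcone.smul_mem_iff hτ, pairPoint_smul, lt_div_iff₀ hτ, mul_comm s τ]
  refine hrep _ _ ?_ ?_
  · rwa [norm_smul, Real.norm_of_nonneg hτ.le]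
  · rw [abs_mul, abs_of_pos hτ]
    nlinarith [abs_nonneg s]

lemma IsLocalSubgraph.eventually_div_eq (hrep : IsLocalSubgraph C u r)
    (hcone : IsConeWithVertex C 0) (hr : 0 < r) {L : EuclideanSpace ℝ (Fin n) →L[ℝ] ℝ}
    (hL : HasFDerivAt u L 0) (hu0 : u 0 = 0) (xhat : EuclideanSpace ℝ (Fin n)) :
    ∀ᶠ τ in 𝓝[>] 0, u (τ • xhat) / τ = L xhat := by
  set g := fun τ : ℝ => u (τ • xhat) / τ
  set M := |L xhat| + 1
  have hg : Tendsto g (𝓝[>] 0) (𝓝 (L xhat)) :=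
    (hL.tendsto_apply_smul_div hu0 xhat).mono_left (nhdsWithin_mono _ fun τ hτ => ne_of_gt hτ)
  let good := fun τ : ℝ => 0 < τ ∧ τ * ‖xhat‖ < r ∧ τ * M < r ∧ |g τ| < M
  have hgood : ∀ᶠ τ in 𝓝[>] 0, good τ :=
    eventually_mem_nhdsWithin.and <| (eventually_mul_lt_nhdsGT hr _).and <|
      (eventually_mul_lt_nhdsGT hr _).and (hg.abs.eventually_lt_const (lt_add_one _))
  -- Both quotients are the threshold on `s` for `pairPoint xhat s ∈ C`, so they agree.
  have hconst : ∀ τ σ, good τ → good σ → g σ = g τ :=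
    fun τ σ ⟨hτ, hτx, hτM, hgτ⟩ ⟨hσ, hσx, hσM, hgσ⟩ =>
      eq_of_forall_lt_iff_of_abs_lt hgσ hgτ fun s hs =>
        (hrep.mem_iff_lt_div hcone hσ hσx hσM hs).symm.trans
          (hrep.mem_iff_lt_div hcone hτ hτx hτM hs)
  filter_upwards [hgood] with τ hτ
  exact tendsto_nhds_unique
    (tendsto_const_nhds.congr' <| hgood.mono fun σ hσ => (hconst τ σ hτ hσ).symm) hg

lemma IsLocalSubgraph.mem_iff_lt_fderiv (hrep : IsLocalSubgraph C u r)
    (hcone : IsConeWithVertex C 0) (hr : 0 < r) {L : EuclideanSpace ℝ (Fin n) →L[ℝ] ℝ}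
    (hL : HasFDerivAt u L 0) (hu0 : u 0 = 0) (xhat : EuclideanSpace ℝ (Fin n)) (t : ℝ) :
    pairPoint xhat t ∈ C ↔ t < L xhat := by
  obtain ⟨τ, hτ, hx, ht, hslope⟩ := (eventually_mem_nhdsWithin.and <|
    (eventually_mul_lt_nhdsGT hr _).and <| (eventually_mul_lt_nhdsGT hr (|t| + 1)).and
      (hrep.eventually_div_eq hcone hr hL hu0 xhat)).exists
  rw [hrep.mem_iff_lt_div hcone hτ hx ht (lt_add_one _), hslope]

end LocalSubgraph

lemma frontier_setOf_last_lt {n : ℕ} (L : EuclideanSpace ℝ (Fin n) →L[ℝ] ℝ) :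
    frontier {x : EuclideanSpace ℝ (Fin (n + 1)) |
        x (Fin.last n) < L (WithLp.toLp 2 (fun i : Fin n => x i.castSucc))} =
      {x | x (Fin.last n) = L (WithLp.toLp 2 (fun i : Fin n => x i.castSucc))} := by
  let init : EuclideanSpace ℝ (Fin (n + 1)) →L[ℝ] EuclideanSpace ℝ (Fin n) :=
    (EuclideanSpace.equiv (Fin n) ℝ).symm.toContinuousLinearMap.comp
      (ContinuousLinearMap.pi fun i : Fin n => EuclideanSpace.proj i.castSucc)
  let φ : StrongDual ℝ (EuclideanSpace ℝ (Fin (n + 1))) :=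
    EuclideanSpace.proj (Fin.last n) - L.comp init
  have hφ : φ ≠ 0 := fun h => by
    simpa [φ, init, pairPoint, ← Pi.zero_def] using DFunLike.congr_fun h (pairPoint 0 1)
  have hφ_lt : {x : EuclideanSpace ℝ (Fin (n + 1)) |
      x (Fin.last n) < L (WithLp.toLp 2 (fun i : Fin n => x i.castSucc))} = φ ⁻¹' Iio 0 := by
    ext x
    simp [φ, init]
  rw [hφ_lt, ← (φ.isOpenMap_of_ne_zero hφ).preimage_frontier_eq_frontier_preimage φ.continuous,
    frontier_Iio]
  ext x
  simp [φ, init, sub_eq_zero]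

theorem cone_subgraph_of_C1_is_halfspace {n : ℕ}
    (C : Set (EuclideanSpace ℝ (Fin (n + 1))))
    (hcone : IsConeWithVertex C 0)
    (r : ℝ) (hr : 0 < r)
    (u : EuclideanSpace ℝ (Fin n) → ℝ)
    (hu : ContDiffOn ℝ 1 u (ball 0 r)) (hu0 : u 0 = 0)
    (hrep : ∀ xhat : EuclideanSpace ℝ (Fin n), ∀ s : ℝ, ‖xhat‖ < r → |s| < r →
      (pairPoint xhat s ∈ C ↔ s < u xhat)) :
    C = {x : EuclideanSpace ℝ (Fin (n + 1)) |
          x (Fin.last n) < fderiv ℝ u 0 (WithLp.toLp 2 (fun i : Fin n => x i.castSucc))} ∧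
    frontier C = {x : EuclideanSpace ℝ (Fin (n + 1)) |
          x (Fin.last n) = fderiv ℝ u 0 (WithLp.toLp 2 (fun i : Fin n => x i.castSucc))} := by
  have hL : HasFDerivAt u (fderiv ℝ u 0) 0 :=
    ((hu.differentiableOn one_ne_zero).differentiableAt (ball_mem_nhds 0 hr)).hasFDerivAt
  have hC : C = {x : EuclideanSpace ℝ (Fin (n + 1)) |
      x (Fin.last n) < fderiv ℝ u 0 (WithLp.toLp 2 (fun i : Fin n => x i.castSucc))} := by
    ext x
    simpa only [pairPoint_eta, Set.mem_ofPred_eq] using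
      IsLocalSubgraph.mem_iff_lt_fderiv hrep hcone hr hL hu0
        (WithLp.toLp 2 (fun i : Fin n => x i.castSucc)) (x (Fin.last n))
  exact ⟨hC, hC ▸ frontier_setOf_last_lt _⟩
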